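/- For integers p, q, r, s with ps ≠ rq, set p' = gcd(p,q) and r' = gcd(r,s). Then |ps − rq| − (p' + r') + 1 ≥ 0, with equality only if (p' = 1 or r' = 1) and |p₁s₁ − r₁q₁| = 1, where p = p₁p', q = q₁p', r = r₁r', s = s₁r'. -/
import Mathlib


/-- Lemma 5.4: For positive integers `p, q, r, s` with `ps ≠ rq`, setting
`p' = gcd(p,q)` and `r' = gcd(r,s)`, one has `|ps − rq| − (p' + r') + 1 ≥ 0`, with
equality only if (`p' = 1` or `r' = 1`) and `|p₁s₁ − r₁q₁| = 1`, where `p = p₁p'`,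
`q = q₁p'`, `r = r₁r'`, `s = s₁r'`. -/
theorem abs_ps_sub_rq_ge (p q r s : ℕ)
    (hp : 0 < p) (hq : 0 < q) (hr : 0 < r) (hs : 0 < s)
    (hne : p * s ≠ r * q) :
    ((Nat.gcd p q : ℤ) + (Nat.gcd r s : ℤ) - 1 ≤ |(p * s : ℤ) - (r * q : ℤ)|) ∧
    (|(p * s : ℤ) - (r * q : ℤ)| = (Nat.gcd p q : ℤ) + (Nat.gcd r s : ℤ) - 1 →
      (Nat.gcd p q = 1 ∨ Nat.gcd r s = 1) ∧
      |((p / Nat.gcd p q : ℕ) * (s / Nat.gcd r s : ℕ) : ℤ) -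
        ((r / Nat.gcd r s : ℕ) * (q / Nat.gcd p q : ℕ) : ℤ)| = 1) := by
  set a := Nat.gcd p q with ha
  set b := Nat.gcd r s with hb
  have ha0 : 0 < a := Nat.gcd_pos_of_pos_left q hp
  have hb0 : 0 < b := Nat.gcd_pos_of_pos_left s hr
  have hA1 : (1 : ℤ) ≤ (a : ℤ) := by exact_mod_cast ha0
  have hB1 : (1 : ℤ) ≤ (b : ℤ) := by exact_mod_cast hb0
  have e1 : ((p / a : ℕ) : ℤ) * a = p := by
    exact_mod_cast Nat.div_mul_cancel (Nat.gcd_dvd_left p q)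
  have e2 : ((q / a : ℕ) : ℤ) * a = q := by
    exact_mod_cast Nat.div_mul_cancel (Nat.gcd_dvd_right p q)
  have e3 : ((r / b : ℕ) : ℤ) * b = r := by
    exact_mod_cast Nat.div_mul_cancel (Nat.gcd_dvd_left r s)
  have e4 : ((s / b : ℕ) : ℤ) * b = s := by
    exact_mod_cast Nat.div_mul_cancel (Nat.gcd_dvd_right r s)
  set E : ℤ := ((p / a : ℕ) : ℤ) * ((s / b : ℕ) : ℤ) - ((r / b : ℕ) : ℤ) * ((q / a : ℕ) : ℤ)
    with hE
  have key : (p * s : ℤ) - (r * q : ℤ) = (a : ℤ) * b * E := by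
    rw [hE, ← e1, ← e2, ← e3, ← e4]; ring
  have hEne : E ≠ 0 := by
    intro h
    apply hne
    have : (p * s : ℤ) = (r * q : ℤ) := by
      have := key
      rw [h, mul_zero] at this
      linarith
    exact_mod_cast this
  have hD1 : (1 : ℤ) ≤ |E| := by
    rcases lt_or_gt_of_ne hEne with h | h
    · rw [abs_of_neg h]; omega
    · rw [abs_of_pos h]; omega
  have habs : |(p * s : ℤ) - (r * q : ℤ)| = (a : ℤ) * b * |E| := by
    rw [key, abs_mul, abs_mul, abs_of_nonneg (by positivity : (0:ℤ) ≤ (a:ℤ)),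
      abs_of_nonneg (by positivity : (0:ℤ) ≤ (b:ℤ))]
  constructor
  · rw [habs]; nlinarith [mul_nonneg (sub_nonneg.mpr hA1) (sub_nonneg.mpr hB1)]
  · intro heq
    rw [habs] at heq
    have hDle : |E| ≤ 1 := by
      nlinarith [mul_nonneg (sub_nonneg.mpr hA1) (sub_nonneg.mpr hB1),
        mul_pos (lt_of_lt_of_le one_pos hA1) (lt_of_lt_of_le one_pos hB1)]
    have hDeq : |E| = 1 := le_antisymm hDle hD1
    refine ⟨?_, hDeq⟩
    have hab' : (a : ℤ) * b = (a : ℤ) + b - 1 := by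
      rw [hDeq, mul_one] at heq; linarith
    have hab : ((a : ℤ) - 1) * ((b : ℤ) - 1) = 0 := by linear_combination hab'
    rcases mul_eq_zero.mp hab with h | h
    · left; have : (a : ℤ) = 1 := by linarith
      exact_mod_cast this
    · right; have : (b : ℤ) = 1 := by linarith
      exact_mod_cast this
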